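/- Let A and B be Hermitian positive definite n×n matrices. Then the smallest eigenvalue of G(A,B) is at least the geometric mean of the smallest eigenvalues of A and B, i.e. λ_min(G(A,B)) ≥ sqrt(λ_min(A) · λ_min(B)). -/

import Mathlib

open Matrix
open scoped ComplexOrder Classical

/-- Square root of a matrix: the unique PSD square root when `M` is positive
semidefinite, junk value `0` otherwise. -/
noncomputable def msqrt {m : Type*} [Fintype m] [DecidableEq m] (M : Matrix m m ℂ) :
    Matrix m m ℂ :=
  if h : M.PosSemidef then (h.1.eigenvectorUnitary : Matrix m m ℂ) *
    diagonal ((↑) ∘ Real.sqrt ∘ h.1.eigenvalues) * (star h.1.eigenvectorUnitary : Matrix m m ℂ)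
  else 0

/-- The matrix geometric mean `G(A,B) = A^{1/2} (A^{-1/2} B A^{-1/2})^{1/2} A^{1/2}`. -/
noncomputable def matGM {m : Type*} [Fintype m] [DecidableEq m] (A B : Matrix m m ℂ) :
    Matrix m m ℂ :=
  msqrt A * msqrt ((msqrt A)⁻¹ * B * (msqrt A)⁻¹) * msqrt A

/-- Smallest eigenvalue of a Hermitian matrix (junk value `0` otherwise). -/
noncomputable def lmin {m : Type*} [Fintype m] [DecidableEq m] (M : Matrix m m ℂ) : ℝ :=
  if h : M.IsHermitian then ⨅ i, h.eigenvalues i else 0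

/-- Largest eigenvalue of a Hermitian matrix (junk value `0` otherwise). -/
noncomputable def lmax {m : Type*} [Fintype m] [DecidableEq m] (M : Matrix m m ℂ) : ℝ :=
  if h : M.IsHermitian then ⨆ i, h.eigenvalues i else 0

/-! The geometric mean `G = G(A,B)` is the positive solution of the Riccati equation
`G A⁻¹ G = B`. From `λ_min(A) • 1 ≤ A` one gets `λ_min(A) • A⁻¹ ≤ 1`, and conjugating by `G` gives
`λ_min(A) • B ≤ G * G`, hence `λ_min(A) λ_min(B) • 1 ≤ G * G`. Since `G ≥ 0`, taking square roots
on the spectrum of `G` yields `√(λ_min(A) λ_min(B)) • 1 ≤ G`. -/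

open scoped MatrixOrder

section CFC

variable {R : Type*} [Ring R] [StarRing R] [PartialOrder R] [StarOrderedRing R] [TopologicalSpace R]
  [Algebra ℝ R] [ContinuousFunctionalCalculus ℝ R IsSelfAdjoint] [NonnegSpectrumClass ℝ R]

theorem algebraMap_sqrt_le_of_algebraMap_le_mul_self {x : R} (hx : 0 ≤ x) {c : ℝ}
    (h : algebraMap ℝ R c ≤ x * x) : algebraMap ℝ R √c ≤ x := by
  rw [← sq, ← cfc_pow_id (R := ℝ) x 2, algebraMap_le_cfc_iff _ _ _] at h
  rw [algebraMap_le_iff_le_spectrum]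
  exact fun t ht => Real.sqrt_le_iff.mpr ⟨spectrum_nonneg_of_nonneg hx ht, h t ht⟩

end CFC

variable {m : Type*} [Fintype m] [DecidableEq m]

theorem msqrt_eq_sqrt {M : Matrix m m ℂ} (hM : 0 ≤ M) : msqrt M = CFC.sqrt M := by
  rw [msqrt, dif_pos hM.posSemidef, CFC.sqrt_eq_real_sqrt M hM, cfcₙ_eq_cfc (R := ℝ),
    IsHermitian.cfc_eq hM.posSemidef.isHermitian, IsHermitian.cfc, Unitary.conjStarAlgAut_apply]
  rfl

theorem msqrt_nonneg (M : Matrix m m ℂ) : 0 ≤ msqrt M := by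
  by_cases hM : 0 ≤ M
  · exact msqrt_eq_sqrt hM ▸ CFC.sqrt_nonneg M
  · rw [msqrt, dif_neg (mt PosSemidef.nonneg hM)]

theorem msqrt_mul_self {M : Matrix m m ℂ} (hM : 0 ≤ M) : msqrt M * msqrt M = M := by
  rw [msqrt_eq_sqrt hM, CFC.sqrt_mul_sqrt_self M hM]

theorem isSelfAdjoint_inv_msqrt (M : Matrix m m ℂ) : IsSelfAdjoint (msqrt M)⁻¹ :=
  (IsSelfAdjoint.of_nonneg (msqrt_nonneg M)).isHermitian.inv

theorem isUnit_det_msqrt {A : Matrix m m ℂ} (hA : A.PosDef) : IsUnit (msqrt A).det :=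
  isUnit_of_mul_isUnit_left <| by
    rw [← det_mul, msqrt_mul_self hA.posSemidef.nonneg]
    exact (isUnit_iff_isUnit_det A).mp hA.isUnit

theorem smul_inv_le_one_of_algebraMap_le {A : Matrix m m ℂ} (hA : A.PosDef) {a : ℝ}
    (h : algebraMap ℝ _ a ≤ A) : a • A⁻¹ ≤ 1 := by
  have hSS := msqrt_mul_self hA.posSemidef.nonneg
  have hS := isUnit_det_msqrt hA
  have hSinv := isSelfAdjoint_inv_msqrt A
  generalize msqrt A = S at hSS hS hSinv
  calc a • A⁻¹ = star S⁻¹ * algebraMap ℝ _ a * S⁻¹ := by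
        rw [hSinv.star_eq, ← hSS, Algebra.algebraMap_eq_smul_one, Matrix.mul_smul, Matrix.mul_one,
          Matrix.smul_mul, Matrix.mul_inv_rev]
    _ ≤ star S⁻¹ * A * S⁻¹ := star_left_conjugate_le_conjugate h S⁻¹
    _ = 1 := by
      rw [hSinv.star_eq, ← hSS]
      simp only [Matrix.nonsing_inv_mul_cancel_left _ _ hS, Matrix.mul_nonsing_inv _ hS]

theorem riccati_of_mul_self_eq {α : Type*} [CommRing α] {S T A B : Matrix m m α}
    (hSS : S * S = A) (hS : IsUnit S.det) (hT : T * T = S⁻¹ * B * S⁻¹) :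
    S * T * S * A⁻¹ * (S * T * S) = B := by
  rw [← hSS, Matrix.mul_inv_rev]
  simp only [Matrix.mul_assoc, Matrix.mul_nonsing_inv_cancel_left _ _ hS,
    Matrix.nonsing_inv_mul_cancel_left _ _ hS]
  rw [← Matrix.mul_assoc T T, hT]
  simp only [Matrix.mul_assoc, Matrix.mul_nonsing_inv_cancel_left _ _ hS,
    Matrix.nonsing_inv_mul _ hS, Matrix.mul_one]

theorem matGM_nonneg (A B : Matrix m m ℂ) : 0 ≤ matGM A B :=
  conjugate_nonneg_of_nonneg (msqrt_nonneg ((msqrt A)⁻¹ * B * (msqrt A)⁻¹)) (msqrt_nonneg A)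

theorem matGM_mul_inv_mul_matGM {A B : Matrix m m ℂ} (hA : A.PosDef) (hB : 0 ≤ B) :
    matGM A B * A⁻¹ * matGM A B = B :=
  riccati_of_mul_self_eq (msqrt_mul_self hA.posSemidef.nonneg) (isUnit_det_msqrt hA)
    (msqrt_mul_self ((isSelfAdjoint_inv_msqrt A).conjugate_nonneg hB))

theorem algebraMap_sqrt_mul_le_matGM {A B : Matrix m m ℂ} (hA : A.PosDef) (hB : 0 ≤ B) {a b : ℝ}
    (ha : 0 ≤ a) (hAa : algebraMap ℝ _ a ≤ A) (hBb : algebraMap ℝ _ b ≤ B) :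
    algebraMap ℝ _ √(a * b) ≤ matGM A B := by
  set G := matGM A B
  refine algebraMap_sqrt_le_of_algebraMap_le_mul_self (matGM_nonneg A B) ?_
  calc algebraMap ℝ _ (a * b) = a • algebraMap ℝ (Matrix m m ℂ) b := by
        rw [map_mul, Algebra.smul_def]
    _ ≤ a • B := smul_le_smul_of_nonneg_left hBb ha
    _ = G * (a • A⁻¹) * G := by rw [mul_smul_comm, smul_mul_assoc, matGM_mul_inv_mul_matGM hA hB]
    _ ≤ G * 1 * G := conjugate_le_conjugate_of_nonneg
        (smul_inv_le_one_of_algebraMap_le hA hAa) (matGM_nonneg A B)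
    _ = G * G := by rw [mul_one]

theorem lmin_nonneg {M : Matrix m m ℂ} (hM : 0 ≤ M) : 0 ≤ lmin M := by
  rw [lmin, dif_pos hM.posSemidef.isHermitian]
  exact Real.iInf_nonneg hM.posSemidef.eigenvalues_nonneg

theorem le_lmin_iff [Nonempty m] {M : Matrix m m ℂ} (hM : M.IsHermitian) {c : ℝ} :
    c ≤ lmin M ↔ algebraMap ℝ _ c ≤ M := by
  rw [lmin, dif_pos hM, le_ciInf_iff (Set.finite_range _).bddBelow,
    algebraMap_le_iff_le_spectrum (hM : IsSelfAdjoint M), hM.spectrum_real_eq_range_eigenvalues,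
    Set.forall_mem_range]

theorem stmt7_general {n : ℕ} {A B : Matrix (Fin n) (Fin n) ℂ}
    (hA : A.PosDef) (hB : B.PosDef) :
    Real.sqrt (lmin A * lmin B) ≤ lmin (matGM A B) := by
  rcases isEmpty_or_nonempty (Fin n) with _ | _
  · simp [lmin, Real.iInf_of_isEmpty]
  rw [le_lmin_iff (matGM_nonneg A B).isSelfAdjoint]
  exact algebraMap_sqrt_mul_le_matGM hA hB.posSemidef.nonneg (lmin_nonneg hA.posSemidef.nonneg)
    ((le_lmin_iff hA.isHermitian).mp le_rfl) ((le_lmin_iff hB.isHermitian).mp le_rfl)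

theorem stmt7 {n : ℕ} (hn : 0 < n) {A B : Matrix (Fin n) (Fin n) ℂ}
    (hA : A.PosDef) (hB : B.PosDef) :
    Real.sqrt (lmin A * lmin B) ≤ lmin (matGM A B) :=
  stmt7_general hA hB
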